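/- Let M = M(Σ,I) be a free partially commutative monoid, Σ_0 ⊆ Σ, I_0 = (Σ_0×Σ_0) ∩ I, and M_0 = M(Σ_0,I_0) regarded as a submonoid of M. Let B ⊆ M be the set of elements u ∈ M that admit no factorization u = s·u_0 with s ∈ M_0, s ≠ 1, u_0 ∈ M. Then every element w ∈ M can be written as w = a·u with a ∈ M_0 and u ∈ B, and this factorization is unique: if a·u = b·v with a, b ∈ M_0 and u, v ∈ B, then a = b and u = v. -/

import Mathlib

open scoped Classical

/-- The elementary commutation relation on words: `ab ~ ba` for `(a,b) ∈ I`. -/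
def TraceRel {α : Type*} (I : α → α → Prop) : FreeMonoid α → FreeMonoid α → Prop :=
  fun u v => ∃ a b, I a b ∧ u = FreeMonoid.of a * FreeMonoid.of b ∧
    v = FreeMonoid.of b * FreeMonoid.of a

/-- The congruence on the free monoid generated by the commutation relation. -/
def TraceCon {α : Type*} (I : α → α → Prop) : Con (FreeMonoid α) := conGen (TraceRel I)

/-- The free partially commutative monoid `M(Σ, I)`: the monoid presented by
generators `Σ` and relations `ab = ba` for `(a,b) ∈ I`. -/
abbrev TraceMonoid (α : Type*) (I : α → α → Prop) : Type _ := (TraceCon I).Quotient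

/-- The canonical map `Σ* → M(Σ, I)` sending a word to its class. -/
def TraceMonoid.mk {α : Type*} (I : α → α → Prop) : FreeMonoid α →* TraceMonoid α I :=
  Con.mk' _

/-- The projection `π_A : M(Σ, I) → M(A, I_A)` erasing all letters not in `A`. -/
noncomputable def TraceMonoid.proj {α : Type*} (I : α → α → Prop) (A : Set α) :
    TraceMonoid α I →* TraceMonoid A (fun a b => I a.1 b.1) :=
  Con.lift _ ((TraceMonoid.mk _).comp (FreeMonoid.lift fun c =>
    if h : c ∈ A then FreeMonoid.of (⟨c, h⟩ : A) else 1)) <| by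
    refine Con.conGen_le.2 ?_
    rintro u v ⟨a, b, hI, rfl, rfl⟩
    simp only [Con.ker_rel, map_mul, MonoidHom.comp_apply, FreeMonoid.lift_eval_of]
    by_cases ha : a ∈ A <;> by_cases hb : b ∈ A <;>
      simp only [ha, hb, dif_pos, dif_neg, not_false_iff, map_one, one_mul, mul_one]
    rw [← map_mul, ← map_mul]
    exact Quotient.sound (ConGen.Rel.of _ _ ⟨⟨a, ha⟩, ⟨b, hb⟩, hI, rfl, rfl⟩)

/-- The monoid homomorphism `M(A, I_A) → M(Σ, I)` induced by an inclusion `A ⊆ Σ`,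
sending the class of a word `x ∈ A*` to its class in `M(Σ, I)`. -/
def TraceMonoid.embed {σ : Type*} (I : σ → σ → Prop) (A : Set σ) :
    TraceMonoid A (fun a b => I a.1 b.1) →* TraceMonoid σ I :=
  Con.lift _ ((TraceMonoid.mk I).comp (FreeMonoid.map Subtype.val)) <| by
    refine Con.conGen_le.2 ?_
    rintro u v ⟨a, b, hI, rfl, rfl⟩
    simp only [Con.ker_rel, MonoidHom.comp_apply, map_mul, FreeMonoid.map_of]
    rw [← map_mul, ← map_mul]
    exact Quotient.sound (ConGen.Rel.of _ _ ⟨a.1, b.1, hI, rfl, rfl⟩)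

/-!
Two words represent the same trace iff they have the same projection onto every set of pairwise
non-commuting letters. This gives left cancellation, and a Levi-type splitting: if a letter `x`
left-divides `b * v` with `b` spelled by a word `β`, then either `x` occurs in `β` and moves to its
front, or `x` left-divides `v`. For `x ∈ S₀` and `v ∈ B` only the first case is possible, so the
letters of `a` can be cancelled one at a time against `b`. Existence is an induction on length.
-/

theorem Submonoid.exists_mem_mul_of_lt_mul {M : Type*} [Monoid M] (N : Submonoid M) (ℓ : M → ℕ)
    (hℓ : ∀ s u, s ≠ 1 → ℓ u < ℓ (s * u)) (w : M) :
    ∃ a ∈ N, ∃ u, (¬ ∃ s ∈ N, s ≠ 1 ∧ ∃ u₀, u = s * u₀) ∧ w = a * u := by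
  induction w using (measure ℓ).wf.induction with
  | h w ih =>
  by_cases hw : ∃ s ∈ N, s ≠ 1 ∧ ∃ u₀, w = s * u₀
  · obtain ⟨s, hs, hs1, u₀, rfl⟩ := hw
    obtain ⟨a, ha, u, hu, rfl⟩ := ih u₀ (hℓ s u₀ hs1)
    exact ⟨s * a, N.mul_mem hs ha, u, hu, (mul_assoc s a u).symm⟩
  · exact ⟨1, N.one_mem, w, hw, (one_mul w).symm⟩

/-- Since `P b` for some `b ∈ p`, the `P`-projection of `p ++ x :: q` starts with a letter
of `p`. -/
theorem List.mem_of_filter_cons_eq_filter_append_cons {α : Type*} {P : α → Bool} {x b : α}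
    {u p q : List α} (hx : P x) (hb : P b) (hbp : b ∈ p)
    (h : (x :: u).filter P = (p ++ x :: q).filter P) : x ∈ p := by
  obtain ⟨c, t, hct⟩ :=
    List.exists_cons_of_ne_nil (List.ne_nil_of_mem (List.mem_filter.2 ⟨hbp, hb⟩))
  rw [List.filter_append, List.filter_cons_of_pos hx, List.filter_cons_of_pos hx, hct,
    List.cons_append] at h
  obtain ⟨rfl, -⟩ := List.cons.inj h
  exact List.mem_of_mem_filter (hct ▸ List.mem_cons_self)

namespace TraceMonoid

variable {σ : Type*} {I : σ → σ → Prop}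

variable (I) in
def of (x : σ) : TraceMonoid σ I := mk I (FreeMonoid.of x)

variable (I) in
def ofList (l : List σ) : TraceMonoid σ I := mk I (FreeMonoid.ofList l)

@[simp]
theorem ofList_nil : ofList I ([] : List σ) = 1 := rfl

theorem ofList_cons (x : σ) (l : List σ) : ofList I (x :: l) = of I x * ofList I l := rfl

theorem ofList_append (u v : List σ) : ofList I (u ++ v) = ofList I u * ofList I v := by
  simp only [ofList, FreeMonoid.ofList_append, map_mul]

theorem ofList_surjective : Function.Surjective (ofList I) := by
  rintro ⟨w⟩
  exact ⟨FreeMonoid.toList w, rfl⟩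

theorem commute_of {a b : σ} (hab : I a b) : Commute (of I a) (of I b) :=
  Quotient.sound (ConGen.Rel.of _ _ ⟨a, b, hab, rfl, rfl⟩)

theorem ofList_append_cons {x : σ} {p : List σ} (hp : ∀ b ∈ p, Commute (of I x) (of I b))
    (q : List σ) : ofList I (p ++ x :: q) = of I x * ofList I (p ++ q) := by
  induction p with
  | nil => rfl
  | cons b p ih =>
    simp only [List.cons_append, ofList_cons]
    rw [ih fun c hc => hp c (List.mem_cons_of_mem b hc),
      (hp b List.mem_cons_self).symm.left_comm]

variable (I) in
/-- Read off the image of the trace in `FreeMonoid Unit`, where all letters commute. -/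
def length (w : TraceMonoid σ I) : ℕ :=
  FreeMonoid.length <| (TraceCon I).lift (FreeMonoid.map fun _ => ())
    (Con.conGen_le.2 <| by rintro _ _ ⟨a, b, -, rfl, rfl⟩; rfl) w

@[simp]
theorem length_ofList (l : List σ) : length I (ofList I l) = l.length :=
  List.length_map _

theorem length_mul (u v : TraceMonoid σ I) : length I (u * v) = length I u + length I v := by
  simp only [length, map_mul, FreeMonoid.length_mul]

theorem length_lt_length_mul {s : TraceMonoid σ I} (hs : s ≠ 1) (u : TraceMonoid σ I) :
    length I u < length I (s * u) := by
  obtain ⟨_ | ⟨x, l⟩, rfl⟩ := ofList_surjective s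
  · exact absurd ofList_nil hs
  · simp [length_mul]

@[simp]
theorem length_one : length I (1 : TraceMonoid σ I) = 0 := length_ofList []

@[simp]
theorem length_of (x : σ) : length I (of I x) = 1 := length_ofList [x]

theorem of_ne_one (x : σ) : of I x ≠ 1 := fun h => by
  simpa using congrArg (length I) h

theorem filter_eq_of_ofList_eq {A : Set σ} (hA : A.Pairwise fun a b => ¬ I a b) {u v : List σ}
    (h : ofList I u = ofList I v) : u.filter (· ∈ A) = v.filter (· ∈ A) := by
  let π : FreeMonoid σ →* FreeMonoid σ :=
    { toFun := fun w => FreeMonoid.ofList (w.toList.filter (· ∈ A))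
      map_one' := rfl
      map_mul' := fun u v => by simp [List.filter_append] }
  have hπ : TraceCon I ≤ Con.ker π := Con.conGen_le.2 <| by
    rintro _ _ ⟨a, b, hab, rfl, rfl⟩
    by_cases ha : a ∈ A <;> by_cases hb : b ∈ A
    · obtain rfl : a = b := by_contra fun hne => hA ha hb hne hab
      rfl
    all_goals
      change FreeMonoid.ofList ([a, b].filter _) = FreeMonoid.ofList ([b, a].filter _)
      simp [ha, hb]
  exact congrArg FreeMonoid.toList (hπ ((Con.eq _).1 h))

theorem exists_eq_append_cons_of_forall_filter_eq {x : σ} {u v : List σ}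
    (h : ∀ A : Set σ, A.Pairwise (fun a b => ¬ I a b) →
      (x :: u).filter (· ∈ A) = v.filter (· ∈ A)) :
    ∃ p q, v = p ++ x :: q ∧ ∀ b ∈ p, Commute (of I x) (of I b) := by
  have hx : x ∈ v := by
    have := h {x} (Set.pairwise_singleton _ _)
    simp only [List.filter_cons, Set.mem_singleton_iff, decide_true, if_true] at this
    exact (List.mem_filter.1 (this ▸ List.mem_cons_self)).1
  obtain ⟨p, q, rfl, hxp⟩ := List.eq_append_cons_of_mem hx
  refine ⟨p, q, rfl, fun b hb => ?_⟩
  by_contra hcomm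
  have hxb : ¬ I x b ∧ ¬ I b x := ⟨fun h' => hcomm (commute_of h'),
    fun h' => hcomm (commute_of h').symm⟩
  exact hxp <| List.mem_of_filter_cons_eq_filter_append_cons (by simp) (by simp) hb
    (h {x, b} (Set.pairwise_pair.2 fun _ => hxb))

theorem ofList_eq_of_forall_filter_eq {u v : List σ}
    (h : ∀ A : Set σ, A.Pairwise (fun a b => ¬ I a b) → u.filter (· ∈ A) = v.filter (· ∈ A)) :
    ofList I u = ofList I v := by
  induction u generalizing v with
  | nil =>
    obtain _ | ⟨y, v⟩ := v
    · rfl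
    · simpa using h {y} (Set.pairwise_singleton _ _)
  | cons x u ih =>
    obtain ⟨p, q, rfl, hp⟩ := exists_eq_append_cons_of_forall_filter_eq h
    have hv := ofList_append_cons hp q
    rw [hv, ofList_cons, ih fun A hA => ?_]
    have hxu := h A hA
    rw [filter_eq_of_ofList_eq hA (hv.trans (ofList_cons x (p ++ q)).symm)] at hxu
    by_cases hxA : x ∈ A <;> simpa [List.filter_cons, hxA] using hxu

instance : IsLeftCancelMul (TraceMonoid σ I) where
  mul_left_cancel a u v h := by
    obtain ⟨m, rfl⟩ := ofList_surjective a
    obtain ⟨μ, rfl⟩ := ofList_surjective u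
    obtain ⟨ω, rfl⟩ := ofList_surjective v
    refine ofList_eq_of_forall_filter_eq fun A hA => ?_
    have := filter_eq_of_ofList_eq hA
      (by rwa [ofList_append, ofList_append] : ofList I (m ++ μ) = ofList I (m ++ ω))
    simpa [List.filter_append] using this

theorem exists_sublist_or_exists_of_of_mul_eq {x : σ} {w v : TraceMonoid σ I} {β : List σ}
    (h : of I x * w = ofList I β * v) :
    (∃ β', β'.Sublist β ∧ ofList I β = of I x * ofList I β') ∨ ∃ v', v = of I x * v' := by
  obtain ⟨μ, rfl⟩ := ofList_surjective w
  obtain ⟨ω, rfl⟩ := ofList_surjective v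
  rw [← ofList_cons, ← ofList_append] at h
  obtain ⟨p, q, hpq, hp⟩ := exists_eq_append_cons_of_forall_filter_eq (I := I)
    fun A hA => filter_eq_of_ofList_eq hA h
  rcases List.append_eq_append_iff.1 hpq with ⟨t, rfl, rfl⟩ | ⟨c, rfl, hc⟩
  · exact .inr ⟨_, ofList_append_cons (fun b hb => hp b (List.mem_append_right β hb)) q⟩
  · rcases List.cons_eq_append_iff.1 hc with ⟨rfl, rfl⟩ | ⟨t, rfl, -⟩
    · exact .inr ⟨ofList I q, rfl⟩
    · exact .inl ⟨p ++ t, (List.sublist_cons_self x t).append_left p, ofList_append_cons hp t⟩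

theorem mem_mrange_embed_iff {A : Set σ} {w : TraceMonoid σ I} :
    w ∈ MonoidHom.mrange (embed I A) ↔ ∃ l : List σ, (∀ e ∈ l, e ∈ A) ∧ ofList I l = w := by
  constructor
  · rintro ⟨⟨l⟩, rfl⟩
    exact ⟨(FreeMonoid.toList l).map Subtype.val, by simp +contextual, rfl⟩
  · rintro ⟨l, hl, rfl⟩
    lift l to List A using hl
    exact ⟨ofList _ l, rfl⟩

theorem eq_and_eq_of_ofList_mul_eq {A : Set σ} {α β : List σ} (hα : ∀ e ∈ α, e ∈ A)
    (hβ : ∀ e ∈ β, e ∈ A) {u v : TraceMonoid σ I}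
    (hu : ¬ ∃ s ∈ MonoidHom.mrange (embed I A), s ≠ 1 ∧ ∃ u₀, u = s * u₀)
    (hv : ¬ ∃ s ∈ MonoidHom.mrange (embed I A), s ≠ 1 ∧ ∃ v₀, v = s * v₀)
    (h : ofList I α * u = ofList I β * v) : ofList I α = ofList I β ∧ u = v := by
  induction α generalizing β with
  | nil =>
    rw [ofList_nil, one_mul] at h
    by_cases hβ1 : ofList I β = 1
    · rw [hβ1, one_mul] at h
      exact ⟨hβ1.symm, h⟩
    · exact absurd ⟨_, mem_mrange_embed_iff.2 ⟨β, hβ, rfl⟩, hβ1, v, h⟩ hu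
  | cons x α ih =>
    rw [ofList_cons, mul_assoc] at h
    rcases exists_sublist_or_exists_of_of_mul_eq h with ⟨β', hβ', hβx⟩ | ⟨v', rfl⟩
    · rw [hβx, mul_assoc] at h
      obtain ⟨hαβ', rfl⟩ := ih (fun e he => hα e (List.mem_cons_of_mem x he))
        (fun e he => hβ e (hβ'.subset he)) (mul_left_cancel h)
      exact ⟨by rw [ofList_cons, hαβ', hβx], rfl⟩
    · have hx : of I x ∈ MonoidHom.mrange (embed I A) :=
        mem_mrange_embed_iff.2 ⟨[x], by simpa using hα x List.mem_cons_self, rfl⟩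
      exact absurd ⟨of I x, hx, of_ne_one x, v', rfl⟩ hv

end TraceMonoid

theorem unique_factorization_over_submonoid_general {σ : Type*} (I : σ → σ → Prop) (S₀ : Set σ) :
    letI M₀ : Submonoid (TraceMonoid σ I) := MonoidHom.mrange (TraceMonoid.embed I S₀)
    letI B : Set (TraceMonoid σ I) :=
      {u | ¬ ∃ s ∈ M₀, s ≠ 1 ∧ ∃ u₀, u = s * u₀}
    (∀ w : TraceMonoid σ I, ∃ a ∈ M₀, ∃ u ∈ B, w = a * u) ∧
    (∀ a b u v : TraceMonoid σ I, a ∈ M₀ → b ∈ M₀ → u ∈ B → v ∈ B →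
      a * u = b * v → a = b ∧ u = v) := by
  refine ⟨(MonoidHom.mrange (TraceMonoid.embed I S₀)).exists_mem_mul_of_lt_mul
    (TraceMonoid.length I) fun s u hs => TraceMonoid.length_lt_length_mul hs u, ?_⟩
  intro a b u v ha hb hu hv h
  obtain ⟨α, hα, rfl⟩ := TraceMonoid.mem_mrange_embed_iff.1 ha
  obtain ⟨β, hβ, rfl⟩ := TraceMonoid.mem_mrange_embed_iff.1 hb
  exact TraceMonoid.eq_and_eq_of_ofList_mul_eq hα hβ hu hv h

/-- Every element `w` of `M = M(Σ,I)` factors uniquely as `w = a·u` where `a` lies in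
the submonoid `M₀ = M(Σ₀, I₀)` (identified with its image in `M`), and `u` lies in the
set `B` of elements admitting no factorization `u = s·u₀` with `1 ≠ s ∈ M₀`. -/
theorem unique_factorization_over_submonoid {σ : Type*} [Fintype σ] (I : σ → σ → Prop)
    (hsym : Symmetric I) (hirr : Irreflexive I) (S₀ : Set σ) :
    letI M₀ : Submonoid (TraceMonoid σ I) := MonoidHom.mrange (TraceMonoid.embed I S₀)
    letI B : Set (TraceMonoid σ I) :=
      {u | ¬ ∃ s ∈ M₀, s ≠ 1 ∧ ∃ u₀, u = s * u₀}
    (∀ w : TraceMonoid σ I, ∃ a ∈ M₀, ∃ u ∈ B, w = a * u) ∧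
    (∀ a b u v : TraceMonoid σ I, a ∈ M₀ → b ∈ M₀ → u ∈ B → v ∈ B →
      a * u = b * v → a = b ∧ u = v) :=
  unique_factorization_over_submonoid_general I S₀
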